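/- The integral over the standard simplex {(b1,b2,b3) : bi ≥ 0, b1+b2+b3 ≤ 1} of ‖D·b + d0‖², multiplied by 6, equals (1/10) · Σ_{0 ≤ j ≤ i ≤ 3} dᵢᵀdⱼ, where d0,d1,d2,d3 ∈ R³ and D is the 3×3 matrix with columns d1-d0, d2-d0, d3-d0. -/

import Mathlib

open scoped RealInnerProductSpace
open MeasureTheory Set intervalIntegral

noncomputable def E3 : (ℝ × (ℝ × ℝ)) ≃ᵐ (Fin 3 → ℝ) :=
  ((MeasurableEquiv.refl ℝ).prodCongr (MeasurableEquiv.finTwoArrow (α := ℝ)).symm).trans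
    (MeasurableEquiv.piFinSuccAbove (fun _ : Fin 3 => ℝ) 0).symm

lemma E3_mp : MeasurePreserving E3 volume volume :=
  ((volume_preserving_piFinSuccAbove (fun _ : Fin 3 => ℝ) 0).symm).comp
    ((MeasurePreserving.id volume).prod (volume_preserving_finTwoArrow ℝ).symm)

lemma E3_apply (x y z : ℝ) : E3 (x, (y, z)) = ![x, y, z] := by
  funext i
  fin_cases i <;>
    simp [E3, MeasurableEquiv.piFinSuccAbove, Fin.insertNthEquiv, MeasurableEquiv.finTwoArrow,
      MeasurableEquiv.prodCongr, MeasurableEquiv.piFinTwo, Equiv.prodCongr, Fin.cons]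
  all_goals rfl

def S3 : Set (Fin 3 → ℝ) := {b | (∀ i, 0 ≤ b i) ∧ ∑ i, b i ≤ 1}
def T3 : Set (ℝ × (ℝ × ℝ)) := {p | 0 ≤ p.1 ∧ 0 ≤ p.2.1 ∧ 0 ≤ p.2.2 ∧ p.1 + p.2.1 + p.2.2 ≤ 1}

lemma E3_preim : E3 ⁻¹' S3 = T3 := by
  ext ⟨x, y, z⟩
  simp only [Set.mem_preimage, E3_apply, S3, T3, Set.mem_setOf_eq, Fin.sum_univ_three,
    Matrix.cons_val_zero, Matrix.cons_val_one, Matrix.head_cons, Matrix.cons_val_two,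
    Matrix.tail_cons]
  constructor
  · rintro ⟨h1, h2⟩
    exact ⟨by simpa using h1 0, by simpa using h1 1, by simpa using h1 2, h2⟩
  · rintro ⟨h1, h2, h3, h4⟩
    refine ⟨fun i => ?_, h4⟩
    fin_cases i <;> simpa

lemma isClosed_T3 : IsClosed T3 :=
  (isClosed_le continuous_const continuous_fst).inter
    ((isClosed_le continuous_const (continuous_fst.comp continuous_snd)).inter
      ((isClosed_le continuous_const (continuous_snd.comp continuous_snd)).inter
        (isClosed_le ((continuous_fst.add (continuous_fst.comp continuous_snd)).add
          (continuous_snd.comp continuous_snd)) continuous_const)))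

lemma isCompact_T3 : IsCompact T3 := by
  refine IsCompact.of_isClosed_subset
    (isCompact_Icc (a := ((0:ℝ), ((0:ℝ), (0:ℝ)))) (b := (1, (1, 1)))) isClosed_T3 ?_
  rintro ⟨x, y, z⟩ ⟨h1, h2, h3, h4⟩
  simp only [Set.mem_Icc, Prod.mk_le_mk]
  exact ⟨⟨h1, h2, h3⟩, by linarith, by linarith, by linarith⟩

lemma isClosed_tri (c : ℝ) : IsClosed {q : ℝ × ℝ | 0 ≤ q.1 ∧ 0 ≤ q.2 ∧ q.1 + q.2 ≤ c} :=
  (isClosed_le continuous_const continuous_fst).inter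
    ((isClosed_le continuous_const continuous_snd).inter
      (isClosed_le (continuous_fst.add continuous_snd) continuous_const))

lemma isCompact_tri (c : ℝ) : IsCompact {q : ℝ × ℝ | 0 ≤ q.1 ∧ 0 ≤ q.2 ∧ q.1 + q.2 ≤ c} := by
  refine IsCompact.of_isClosed_subset (isCompact_Icc (a := ((0:ℝ), (0:ℝ))) (b := (c, c)))
    (isClosed_tri c) ?_
  rintro ⟨x, y⟩ ⟨h1, h2, h3⟩
  simp only [Set.mem_Icc, Prod.mk_le_mk]
  exact ⟨⟨h1, h2⟩, by linarith, by linarith⟩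

lemma master (f : (Fin 3 → ℝ) → ℝ) (hf : Continuous f) :
    ∫ b in {b : Fin 3 → ℝ | (∀ i, 0 ≤ b i) ∧ ∑ i, b i ≤ 1}, f b
      = ∫ x in (0:ℝ)..1, ∫ y in (0:ℝ)..(1-x), ∫ z in (0:ℝ)..(1-x-y), f ![x, y, z] := by
  have hg : Continuous (fun p : ℝ × (ℝ × ℝ) => f ![p.1, p.2.1, p.2.2]) := by
    refine hf.comp (continuous_pi fun i => ?_)
    fin_cases i
    · simpa using continuous_fst
    · simpa using continuous_snd.fst
    · simpa using continuous_snd.snd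
  set g : ℝ × (ℝ × ℝ) → ℝ := fun p => f ![p.1, p.2.1, p.2.2] with hgdef
  have hT3m : MeasurableSet T3 := isClosed_T3.measurableSet
  have h0 : (∫ b in {b : Fin 3 → ℝ | (∀ i, 0 ≤ b i) ∧ ∑ i, b i ≤ 1}, f b) = ∫ p in T3, g p := by
    rw [show {b : Fin 3 → ℝ | (∀ i, 0 ≤ b i) ∧ ∑ i, b i ≤ 1} = S3 from rfl,
      ← E3_mp.setIntegral_preimage_emb E3.measurableEmbedding f S3, E3_preim]
    exact setIntegral_congr_fun hT3m fun p _ => congrArg f (E3_apply p.1 p.2.1 p.2.2)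
  rw [h0, ← MeasureTheory.integral_indicator hT3m]
  have hInt : Integrable (T3.indicator g) :=
    (integrable_indicator_iff hT3m).2 (hg.continuousOn.integrableOn_compact isCompact_T3)
  rw [show (volume : Measure (ℝ × (ℝ × ℝ))) = (volume : Measure ℝ).prod volume from rfl, MeasureTheory.integral_prod _ hInt]
  have outer0 : ∀ x ∉ Icc (0:ℝ) 1, (∫ q : ℝ × ℝ, T3.indicator g (x, q)) = 0 := by
    intro x hx
    have : ∀ q : ℝ × ℝ, T3.indicator g (x, q) = 0 := by
      intro q
      apply indicator_of_notMem
      rintro ⟨h1, h2, h3, h4⟩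
      exact hx ⟨h1, by simp only [] at h2 h3 h4 ⊢; linarith⟩
    simp [this]
  rw [← setIntegral_eq_integral_of_forall_compl_eq_zero outer0,
    MeasureTheory.integral_Icc_eq_integral_Ioc, ← intervalIntegral.integral_of_le zero_le_one]
  refine intervalIntegral.integral_congr fun x hx => ?_
  rw [Set.uIcc_of_le zero_le_one] at hx
  obtain ⟨hx0, hx1⟩ := hx
  set Tx : Set (ℝ × ℝ) := {q | 0 ≤ q.1 ∧ 0 ≤ q.2 ∧ q.1 + q.2 ≤ 1 - x} with hTx
  have hTxm : MeasurableSet Tx := (isClosed_tri _).measurableSet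
  have e2 : (fun q : ℝ × ℝ => T3.indicator g (x, q)) = Tx.indicator (fun q => g (x, q)) := by
    funext q
    by_cases h : q ∈ Tx
    · rw [indicator_of_mem h, indicator_of_mem]
      exact ⟨hx0, h.1, h.2.1, by have := h.2.2; linarith⟩
    · rw [indicator_of_notMem h, indicator_of_notMem]
      rintro ⟨h1, h2, h3, h4⟩
      exact h ⟨h2, h3, by linarith⟩
  rw [e2]
  have hgx : Continuous fun q : ℝ × ℝ => g (x, q) :=
    hg.comp (continuous_const.prodMk continuous_id)
  have hInt2 : Integrable (Tx.indicator fun q => g (x, q)) :=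
    (integrable_indicator_iff hTxm).2 (hgx.continuousOn.integrableOn_compact (isCompact_tri _))
  rw [show (volume : Measure (ℝ × ℝ)) = (volume : Measure ℝ).prod volume from rfl,
    MeasureTheory.integral_prod _ hInt2]
  have mid0 : ∀ y ∉ Icc (0:ℝ) (1 - x), (∫ z : ℝ, Tx.indicator (fun q => g (x, q)) (y, z)) = 0 := by
    intro y hy
    have : ∀ z : ℝ, Tx.indicator (fun q => g (x, q)) (y, z) = 0 := by
      intro z
      apply indicator_of_notMem
      rintro ⟨h1, h2, h3⟩
      simp only [] at h1 h2 h3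
      exact hy ⟨h1, by linarith⟩
    simp [this]
  rw [← setIntegral_eq_integral_of_forall_compl_eq_zero mid0,
    MeasureTheory.integral_Icc_eq_integral_Ioc,
    ← intervalIntegral.integral_of_le (by linarith : (0:ℝ) ≤ 1 - x)]
  refine intervalIntegral.integral_congr fun y hy => ?_
  rw [Set.uIcc_of_le (by linarith : (0:ℝ) ≤ 1 - x)] at hy
  obtain ⟨hy0, hy1⟩ := hy
  have e3 : (fun z : ℝ => Tx.indicator (fun q => g (x, q)) (y, z))
      = (Icc (0:ℝ) (1 - x - y)).indicator (fun z => f ![x, y, z]) := by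
    funext z
    by_cases h : z ∈ Icc (0:ℝ) (1 - x - y)
    · rw [indicator_of_mem h, indicator_of_mem]
      exact ⟨hy0, h.1, by have := h.2; linarith⟩
    · rw [indicator_of_notMem h, indicator_of_notMem]
      rintro ⟨h1, h2, h3⟩
      simp only [] at h1 h2 h3
      exact h ⟨h2, by linarith⟩
  rw [e3, MeasureTheory.integral_indicator measurableSet_Icc, MeasureTheory.integral_Icc_eq_integral_Ioc,
    ← intervalIntegral.integral_of_le (by linarith : (0:ℝ) ≤ 1 - x - y)]

lemma poly4 (a0 a1 a2 a3 a4 u : ℝ) :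
    ∫ z in (0:ℝ)..u, (a0 + a1*z + a2*z^2 + a3*z^3 + a4*z^4)
      = a0*u + a1*u^2/2 + a2*u^3/3 + a3*u^4/4 + a4*u^5/5 := by
  have i1 : ∀ (c : ℝ) (n : ℕ), IntervalIntegrable (fun z : ℝ => c * z ^ n) volume 0 u :=
    fun c n => (continuous_const.mul (continuous_pow n)).intervalIntegrable 0 u
  have h : ∀ z : ℝ, a0 + a1*z + a2*z^2 + a3*z^3 + a4*z^4
      = a0*z^0 + (a1*z^1 + (a2*z^2 + (a3*z^3 + a4*z^4))) := fun z => by ring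
  simp_rw [h]
  rw [intervalIntegral.integral_add (i1 a0 0) ((i1 a1 1).add ((i1 a2 2).add ((i1 a3 3).add (i1 a4 4)))),
    intervalIntegral.integral_add (i1 a1 1) ((i1 a2 2).add ((i1 a3 3).add (i1 a4 4))),
    intervalIntegral.integral_add (i1 a2 2) ((i1 a3 3).add (i1 a4 4)),
    intervalIntegral.integral_add (i1 a3 3) (i1 a4 4)]
  simp_rw [intervalIntegral.integral_const_mul, integral_pow]
  push_cast
  ring

lemma quad_int (P Q u : ℝ) : ∫ z in (0:ℝ)..u, (P + Q*z)^2 = P^2*u + P*Q*u^2 + Q^2*u^3/3 := by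
  have h : ∀ z : ℝ, (P + Q*z)^2 = P^2 + (2*P*Q)*z + Q^2*z^2 + 0*z^3 + 0*z^4 := fun z => by ring
  simp_rw [h, poly4]
  ring

lemma mid_int (R s q w : ℝ) :
    ∫ y in (0:ℝ)..w, ((R + s*y)^2*(w-y) + (R + s*y)*q*(w-y)^2 + q^2*(w-y)^3/3)
      = R^2*w^2/2 + R*s*w^3/3 + s^2*w^4/12 + R*q*w^3/3 + s*q*w^4/12 + q^2*w^4/12 := by
  have h : ∀ y : ℝ, (R + s*y)^2*(w-y) + (R + s*y)*q*(w-y)^2 + q^2*(w-y)^3/3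
      = (R^2*w + q*R*w^2 + q^2*w^3/3)
        + (2*R*s*w - R^2 + q*(s*w^2 - 2*R*w) - q^2*w^2)*y
        + (s^2*w - 2*R*s + q*(R - 2*s*w) + q^2*w)*y^2
        + (-s^2 + q*s - q^2/3)*y^3 + 0*y^4 := fun y => by ring
  simp_rw [h, poly4]
  ring

lemma lastInt (c a s q : ℝ) :
    ∫ x in (0:ℝ)..1, ((c+a*x)^2*(1-x)^2/2 + (c+a*x)*s*(1-x)^3/3 + s^2*(1-x)^4/12
        + (c+a*x)*q*(1-x)^3/3 + s*q*(1-x)^4/12 + q^2*(1-x)^4/12)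
      = c^2/6 + c*a/12 + a^2/60 + c*s/12 + a*s/60 + s^2/60 + c*q/12 + a*q/60 + s*q/60 + q^2/60 := by
  have h : ∀ x : ℝ, (c+a*x)^2*(1-x)^2/2 + (c+a*x)*s*(1-x)^3/3 + s^2*(1-x)^4/12
        + (c+a*x)*q*(1-x)^3/3 + s*q*(1-x)^4/12 + q^2*(1-x)^4/12
      = (q^2/12 + s*q/12 + s^2/12 + c*q/3 + c*s/3 + c^2/2)
        + (-q^2/3 - s*q/3 - s^2/3 + a*q/3 + a*s/3 - c*q - c*s + c*a - c^2)*x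
        + (q^2/2 + s*q/2 + s^2/2 - a*q - a*s + a^2/2 + c*q + c*s - 2*c*a + c^2/2)*x^2
        + (-q^2/3 - s*q/3 - s^2/3 + a*q + a*s - a^2 - c*q/3 - c*s/3 + c*a)*x^3
        + (q^2/12 + s*q/12 + s^2/12 - a*q/3 - a*s/3 + a^2/2)*x^4 := fun x => by ring
  simp_rw [h, poly4]
  norm_num
  ring

lemma tripleSum (c a s q : Fin 3 → ℝ) :
    (∫ x in (0:ℝ)..1, ∫ y in (0:ℝ)..(1-x), ∫ z in (0:ℝ)..(1-x-y),
        ∑ i : Fin 3, (c i + a i*x + s i*y + q i*z)^2)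
      = ∑ i : Fin 3, (c i^2/6 + c i*a i/12 + a i^2/60 + c i*s i/12 + a i*s i/60 + s i^2/60
          + c i*q i/12 + a i*q i/60 + s i*q i/60 + q i^2/60) := by
  have h1 : ∀ x y : ℝ, (∫ z in (0:ℝ)..(1-x-y), ∑ i : Fin 3, (c i + a i*x + s i*y + q i*z)^2)
      = ∑ i : Fin 3, ((c i + a i*x + s i*y)^2*(1-x-y) + (c i + a i*x + s i*y)*(q i)*(1-x-y)^2
          + (q i)^2*(1-x-y)^3/3) := by
    intro x y
    rw [intervalIntegral.integral_finset_sum (fun i _ => Continuous.intervalIntegrable (by fun_prop) _ _)]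
    exact Finset.sum_congr rfl fun i _ => by rw [quad_int]
  have h2 : ∀ x : ℝ, (∫ y in (0:ℝ)..(1-x), ∫ z in (0:ℝ)..(1-x-y),
        ∑ i : Fin 3, (c i + a i*x + s i*y + q i*z)^2)
      = ∑ i : Fin 3, ((c i+a i*x)^2*(1-x)^2/2 + (c i+a i*x)*(s i)*(1-x)^3/3 + (s i)^2*(1-x)^4/12
          + (c i+a i*x)*(q i)*(1-x)^3/3 + (s i)*(q i)*(1-x)^4/12 + (q i)^2*(1-x)^4/12) := by
    intro x
    rw [intervalIntegral.integral_congr fun y _ => h1 x y,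
      intervalIntegral.integral_finset_sum (fun i _ => Continuous.intervalIntegrable (by fun_prop) _ _)]
    exact Finset.sum_congr rfl fun i _ => by rw [mid_int]
  rw [intervalIntegral.integral_congr fun x _ => h2 x,
    intervalIntegral.integral_finset_sum (fun i _ => Continuous.intervalIntegrable (by fun_prop) _ _)]
  exact Finset.sum_congr rfl fun i _ => lastInt (c i) (a i) (s i) (q i)

/-- `6 ∫_simplex ‖D b + d0‖² db = (1/10) Σ_{0≤j≤i≤3} dᵢᵀdⱼ`. -/
theorem stmt_1
    (d : Fin 4 → EuclideanSpace ℝ (Fin 3))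
    (D : Matrix (Fin 3) (Fin 3) ℝ)
    (hD : ∀ k : Fin 3, (fun i => D i k) = fun i => (d k.succ - d 0) i) :
    6 * (∫ b in {b : Fin 3 → ℝ | (∀ i, 0 ≤ b i) ∧ ∑ i, b i ≤ 1},
        ∑ i : Fin 3, (d 0 i + ∑ j : Fin 3, D i j * b j) ^ 2)
      = (1 / 10) * ∑ i : Fin 4, ∑ j ∈ Finset.univ.filter (· ≤ i), ⟪d i, d j⟫ := by
  have hf : Continuous fun b : Fin 3 → ℝ => ∑ i : Fin 3, (d 0 i + ∑ j : Fin 3, D i j * b j) ^ 2 := by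
    fun_prop
  rw [master _ hf]
  have e : (∫ x in (0:ℝ)..1, ∫ y in (0:ℝ)..(1-x), ∫ z in (0:ℝ)..(1-x-y),
        ∑ i : Fin 3, (d 0 i + ∑ j : Fin 3, D i j * (![x,y,z] j)) ^ 2)
      = ∫ x in (0:ℝ)..1, ∫ y in (0:ℝ)..(1-x), ∫ z in (0:ℝ)..(1-x-y),
        ∑ i : Fin 3, ((fun i => d 0 i) i + (fun i => D i 0) i * x + (fun i => D i 1) i * y
          + (fun i => D i 2) i * z) ^ 2 := by
    refine intervalIntegral.integral_congr fun x _ => ?_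
    refine intervalIntegral.integral_congr fun y _ => ?_
    refine intervalIntegral.integral_congr fun z _ => ?_
    refine Finset.sum_congr rfl fun i _ => ?_
    rw [Fin.sum_univ_three]
    simp only [Matrix.cons_val_zero, Matrix.cons_val_one, Matrix.head_cons, Matrix.cons_val_two,
      Matrix.tail_cons]
    ring
  rw [e, tripleSum (fun i => d 0 i) (fun i => D i 0) (fun i => D i 1) (fun i => D i 2)]
  have hD' : ∀ (i : Fin 3) (k : Fin 3), D i k = d k.succ i - d 0 i := by
    intro i k
    have := congrFun (hD k) i
    simpa using this
  have h0 : ∀ i : Fin 3, D i 0 = d 1 i - d 0 i := fun i => hD' i 0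
  have h1 : ∀ i : Fin 3, D i 1 = d 2 i - d 0 i := fun i => hD' i 1
  have h2 : ∀ i : Fin 3, D i 2 = d 3 i - d 0 i := fun i => hD' i 2
  have f0 : Finset.univ.filter (· ≤ (0 : Fin 4)) = {0} := by decide
  have f1 : Finset.univ.filter (· ≤ (1 : Fin 4)) = {0, 1} := by decide
  have f2 : Finset.univ.filter (· ≤ (2 : Fin 4)) = {0, 1, 2} := by decide
  have f3 : Finset.univ.filter (· ≤ (3 : Fin 4)) = {0, 1, 2, 3} := by decide
  have g0 : ∀ F : Fin 4 → ℝ, ∑ j ∈ Finset.univ.filter (· ≤ (0:Fin 4)), F j = F 0 := by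
    intro F; rw [f0, Finset.sum_singleton]
  have g1 : ∀ F : Fin 4 → ℝ, ∑ j ∈ Finset.univ.filter (· ≤ (1:Fin 4)), F j = F 0 + F 1 := by
    intro F; rw [f1, Finset.sum_insert (by decide), Finset.sum_singleton]
  have g2 : ∀ F : Fin 4 → ℝ, ∑ j ∈ Finset.univ.filter (· ≤ (2:Fin 4)), F j
      = F 0 + (F 1 + F 2) := by
    intro F; rw [f2, Finset.sum_insert (by decide), Finset.sum_insert (by decide),
      Finset.sum_singleton]
  have g3 : ∀ F : Fin 4 → ℝ, ∑ j ∈ Finset.univ.filter (· ≤ (3:Fin 4)), F j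
      = F 0 + (F 1 + (F 2 + F 3)) := by
    intro F; rw [f3, Finset.sum_insert (by decide), Finset.sum_insert (by decide),
      Finset.sum_insert (by decide), Finset.sum_singleton]
  rw [Fin.sum_univ_four, g0, g1, g2, g3]
  simp only [h0, h1, h2, PiLp.inner_apply, RCLike.inner_apply, conj_trivial, Fin.sum_univ_three]
  ring
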